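/- arXiv:1312.2762 — 3 statements merged into one kernel-verified Lean document; each statement's English description precedes it below -/
import Mathlib

section
/- For n = 17/10 (so m = 30/17, m(m-1)(2-m) = 1560/4913, and the characteristic constant is (7/10)·(1560/4913)^{20/17}): the unique real root l > 2 of l(l-1)(l-2) = (7/10)·(1560/4913)^{20/17} lies in the interval (2.08, 2.09); in particular it satisfies the admissibility conditions 3/n = 30/17 < l < 1 + 3/n = 47/17. Thus the positive one-parameter expansion near the interface exists also in the oscillatory range n < n_h. -/
lemma stmt6_xb : (0.259:ℝ) < ((1560:ℝ)/4913) ^ ((20:ℝ)/17) ∧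
    ((1560:ℝ)/4913) ^ ((20:ℝ)/17) < 0.26 := by
  have ha : (0:ℝ) ≤ 1560/4913 := by norm_num
  have hx : (0:ℝ) < ((1560:ℝ)/4913) ^ ((20:ℝ)/17) :=
    Real.rpow_pos_of_pos (by norm_num) _
  have hpow : (((1560:ℝ)/4913) ^ ((20:ℝ)/17)) ^ (17:ℕ) = ((1560:ℝ)/4913) ^ (20:ℕ) := by
    rw [← Real.rpow_natCast (((1560:ℝ)/4913) ^ ((20:ℝ)/17)) 17, ← Real.rpow_mul ha,
      ← Real.rpow_natCast ((1560:ℝ)/4913) 20]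
    norm_num
  constructor
  · apply lt_of_pow_lt_pow_left₀ 17 hx.le
    rw [hpow]; norm_num
  · apply lt_of_pow_lt_pow_left₀ 17 (by norm_num)
    rw [hpow]; norm_num

lemma stmt6_mono : ∀ a b : ℝ, 2 ≤ a → a < b →
    a * (a - 1) * (a - 2) < b * (b - 1) * (b - 2) := by
  intro a b ha hab
  nlinarith [sq_nonneg (a + b), sq_nonneg (a - b), sq_nonneg (a + b - 3)]

lemma stmt6_mono_le : ∀ a b : ℝ, 2 ≤ a → a ≤ b →
    a * (a - 1) * (a - 2) ≤ b * (b - 1) * (b - 2) := by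
  intro a b ha hab
  rcases eq_or_lt_of_le hab with h | h
  · rw [h]
  · exact (stmt6_mono a b ha h).le

/-- For `n = 17/10` (so `m = 30/17`, `m(m-1)(2-m) = 1560/4913`,
characteristic constant `(7/10)·(1560/4913)^(20/17)`): there is a unique real root
`l > 2` of `l(l-1)(l-2) = (7/10)(1560/4913)^(20/17)`, it lies in `(2.08, 2.09)`, and it
satisfies the admissibility conditions `30/17 < l < 47/17`. Hence the positive
one-parameter expansion near the interface exists also in the oscillatory range. -/
theorem stmt_6 :
    (∃! l : ℝ, 2 < l ∧
      l * (l - 1) * (l - 2) = (7/10) * ((1560:ℝ)/4913) ^ ((20:ℝ)/17)) ∧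
    ∀ l : ℝ, 2 < l →
      l * (l - 1) * (l - 2) = (7/10) * ((1560:ℝ)/4913) ^ ((20:ℝ)/17) →
      2.08 < l ∧ l < 2.09 ∧ 30/17 < l ∧ l < 47/17 := by
  obtain ⟨hx1, hx2⟩ := stmt6_xb
  set C : ℝ := (7/10) * ((1560:ℝ)/4913) ^ ((20:ℝ)/17) with hC
  have hC1 : (0.179712:ℝ) < C := by rw [hC]; nlinarith
  have hC2 : C < (0.205029:ℝ) := by rw [hC]; nlinarith
  have hcont : ContinuousOn (fun l : ℝ => l * (l - 1) * (l - 2)) (Set.Icc 2.08 2.09) := by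
    fun_prop
  have hiv := intermediate_value_Ioo (by norm_num : (2.08:ℝ) ≤ 2.09) hcont
  have hCmem : C ∈ Set.Ioo ((2.08:ℝ) * (2.08 - 1) * (2.08 - 2))
      ((2.09:ℝ) * (2.09 - 1) * (2.09 - 2)) := by
    constructor <;> [nlinarith; nlinarith]
  obtain ⟨l0, hl0mem, hl0eq'⟩ := hiv hCmem
  have hl0eq : l0 * (l0 - 1) * (l0 - 2) = C := hl0eq'
  have hforall : ∀ l : ℝ, 2 < l → l * (l - 1) * (l - 2) = C →
      2.08 < l ∧ l < 2.09 ∧ 30/17 < l ∧ l < 47/17 := by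
    intro l hl hleq
    have h1 : 2.08 < l := by
      by_contra h
      push_neg at h
      have := stmt6_mono_le l 2.08 hl.le h
      nlinarith
    have h2 : l < 2.09 := by
      by_contra h
      push_neg at h
      have := stmt6_mono_le 2.09 l (by norm_num) h
      nlinarith
    refine ⟨h1, h2, by linarith, by linarith⟩
  constructor
  · refine ⟨l0, ⟨by linarith [hl0mem.1], hl0eq⟩, ?_⟩
    intro y ⟨hy, hyeq⟩
    rcases lt_trichotomy y l0 with h | h | h
    · have := stmt6_mono y l0 hy.le h
      rw [hyeq, hl0eq] at this; linarith
    · exact h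
    · have := stmt6_mono l0 y (by linarith [hl0mem.1]) h
      rw [hyeq, hl0eq] at this; linarith
  · exact hforall
end

section
/- Let n = 2, B₀ = √(8/3), and let l be any real number with l(l-1)(l-2) = 3/8. Then for every D ∈ ℝ, the function f(y) = B₀ y^{3/2} + D y^l satisfies, exactly for all y > 0, the identity f(y) · f'''(y) = -1 + (3/8) D² y^{2l-3}. In particular, since l > 2 implies 2l - 3 > 1, the residual f·f''' + 1 = (3/8) D² y^{2l-3} is o(y) as y → 0⁺, so the whole one-parameter family solves the interface equation f f''' = -1 + y to higher order. -/
open Asymptotics Filter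
open scoped Topology

/-!
Since `(y^p)''' = p(p-1)(p-2) y^(p-3)`, and `p(p-1)(p-2) = -3/8` at `p = 3/2` while the
characteristic equation makes it `3/8` at `p = l`, the product `f f'''` expands to
`-(3/8) B₀² + (3/8) D² y^(2l-3)`: the two cross terms `± (3/8) B₀ D y^(l-3/2)` cancel, and
`B₀² = 8/3` turns the constant into `-1`. For `l > 2` the exponent `2l - 3` exceeds `1`,
so the residual is `o(y)` at `0⁺`.
-/

namespace Real

theorem iteratedDeriv_rpow_const (p x : ℝ) (n : ℕ) :
    iteratedDeriv n (fun z : ℝ => z ^ p) x = (descPochhammer ℝ n).eval p * x ^ (p - n) := by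
  rw [iteratedDeriv_eq_iterate]
  exact iter_deriv_rpow_const p x n

theorem iteratedDeriv_const_mul_rpow_add_const_mul_rpow (a b p q : ℝ) {x : ℝ} (hx : x ≠ 0)
    (n : ℕ) :
    iteratedDeriv n (fun z : ℝ => a * z ^ p + b * z ^ q) x =
      a * (descPochhammer ℝ n).eval p * x ^ (p - n) +
        b * (descPochhammer ℝ n).eval q * x ^ (q - n) := by
  rw [iteratedDeriv_fun_add (contDiffAt_const.mul (contDiffAt_rpow_const (.inl hx)))
      (contDiffAt_const.mul (contDiffAt_rpow_const (.inl hx))),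
    iteratedDeriv_const_mul_field, iteratedDeriv_const_mul_field,
    iteratedDeriv_rpow_const, iteratedDeriv_rpow_const, mul_assoc, mul_assoc]

theorem isLittleO_rpow_rpow_nhdsGT_zero {r s : ℝ} (hsr : s < r) :
    (fun x : ℝ => x ^ r) =o[𝓝[>] 0] fun x => x ^ s := by
  have hsmall : (fun x : ℝ => x ^ (r - s)) =o[𝓝[>] 0] fun _ => (1 : ℝ) :=
    (isLittleO_one_iff ℝ).mpr <|
      (tendsto_nhdsWithin_of_tendsto_nhds tendsto_id).rpow_const_nhds_zero (sub_pos.mpr hsr)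
  refine (hsmall.mul_isBigO (isBigO_refl (fun x : ℝ => x ^ s) _)).congr' ?_ (by simp)
  filter_upwards [self_mem_nhdsWithin] with x (hx : 0 < x)
  rw [← rpow_add hx, sub_add_cancel]

end Real

open Real

theorem descPochhammer_three_eval (p : ℝ) :
    (descPochhammer ℝ 3).eval p = p * (p - 1) * (p - 2) := by
  simp [descPochhammer_succ_right]

theorem mul_iteratedDeriv_three_thinFilm {B D l y : ℝ} (hB : B ^ 2 = 8 / 3)
    (hl : l * (l - 1) * (l - 2) = 3 / 8) (hy : 0 < y) :
    (B * y ^ ((3:ℝ)/2) + D * y ^ l) *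
        iteratedDeriv 3 (fun z : ℝ => B * z ^ ((3:ℝ)/2) + D * z ^ l) y =
      -1 + (3/8) * D ^ 2 * y ^ (2 * l - 3) := by
  rw [iteratedDeriv_const_mul_rpow_add_const_mul_rpow B D _ _ hy.ne', descPochhammer_three_eval,
    descPochhammer_three_eval, hl]
  have hcancel : y ^ ((3:ℝ)/2) * y ^ ((3:ℝ)/2 - 3) = 1 := by
    rw [← rpow_add hy]; norm_num
  have hcross : y ^ ((3:ℝ)/2) * y ^ (l - 3) = y ^ l * y ^ ((3:ℝ)/2 - 3) := by
    rw [← rpow_add hy, ← rpow_add hy]; ring_nf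
  have hsquare : y ^ l * y ^ (l - 3) = y ^ (2 * l - 3) := by
    rw [← rpow_add hy]; ring_nf
  push_cast
  linear_combination (-3/8 * B ^ 2) * hcancel + (-3/8) * hB + (3/8 * B * D) * hcross
    + (3/8 * D ^ 2) * hsquare

/-- For `n = 2`, `B₀ = √(8/3)` and any real `l` with `l(l-1)(l-2) = 3/8`,
the whole one-parameter family `f(y) = B₀ y^(3/2) + D y^l` satisfies, exactly for all
`y > 0`, `f(y) f'''(y) = -1 + (3/8) D² y^(2l-3)`; in particular, if `l > 2` then the
residual `f f''' + 1` is `o(y)` as `y → 0⁺`. -/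
theorem stmt_7 (B₀ l : ℝ) (hB₀ : B₀ = Real.sqrt (8/3))
    (hl : l * (l - 1) * (l - 2) = 3/8) :
    (∀ D : ℝ, ∀ y : ℝ, 0 < y →
      (B₀ * y ^ ((3:ℝ)/2) + D * y ^ l) *
        iteratedDeriv 3 (fun z : ℝ => B₀ * z ^ ((3:ℝ)/2) + D * z ^ l) y =
        -1 + (3/8) * D ^ 2 * y ^ (2 * l - 3)) ∧
    (2 < l → ∀ D : ℝ,
      (fun y : ℝ => (B₀ * y ^ ((3:ℝ)/2) + D * y ^ l) *
          iteratedDeriv 3 (fun z : ℝ => B₀ * z ^ ((3:ℝ)/2) + D * z ^ l) y + 1)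
        =o[nhdsWithin 0 (Set.Ioi 0)] fun y : ℝ => y) := by
  have hB : B₀ ^ 2 = 8 / 3 := by rw [hB₀, sq_sqrt (by norm_num)]
  have hf := fun D y (hy : 0 < y) => mul_iteratedDeriv_three_thinFilm (D := D) hB hl hy
  refine ⟨hf, fun hl2 D => ?_⟩
  have hres : (fun y : ℝ => (B₀ * y ^ ((3:ℝ)/2) + D * y ^ l) *
        iteratedDeriv 3 (fun z : ℝ => B₀ * z ^ ((3:ℝ)/2) + D * z ^ l) y + 1)
      =ᶠ[𝓝[>] 0] fun y => 3/8 * D ^ 2 * y ^ (2 * l - 3) := by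
    filter_upwards [self_mem_nhdsWithin] with y (hy : 0 < y)
    rw [hf D y hy]; ring
  refine (IsLittleO.const_mul_left ?_ _).congr' hres.symm EventuallyEq.rfl
  simpa using isLittleO_rpow_rpow_nhdsGT_zero (s := 1) (r := 2 * l - 3) (by linarith)
end

section
/- Let δ > 0. There is no function f : (0, δ) → ℝ that is twice continuously differentiable with f(y) > 0 and f'(y) ≥ 0 for all y ∈ (0, δ), satisfies f(y) → 0 as y → 0⁺, and solves f'(y) f''(y) = 1/(2 f(y)²) on (0, δ). That is, the majorising ODE f' f'' = (1/2) f^{-2} admits no increasing positive solution emanating from a zero at the origin. -/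
/-!
Since `(f'²)' = 2 f' f'' = 1 / f²` is positive, `f'²` increases, so `f'` is bounded near `0`, say
by `C`; together with `f(0⁺) = 0` this gives `f y ≤ C y`. Hence `(f'²)' ≥ 1 / (C y)²`, and
integrating from `y` to a fixed point shows that `f'²` would have to tend to `-∞` as `y → 0⁺`,
which is absurd for a square.
-/

open Set Filter Topology

theorem monotoneOn_Ioo_of_hasDerivAt_nonneg {f f' : ℝ → ℝ} {a b : ℝ}
    (hf : ∀ x ∈ Ioo a b, HasDerivAt f (f' x) x) (hf' : ∀ x ∈ Ioo a b, 0 ≤ f' x) :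
    MonotoneOn f (Ioo a b) :=
  monotoneOn_of_hasDerivWithinAt_nonneg (convex_Ioo a b)
    (fun x hx => (hf x hx).continuousAt.continuousWithinAt)
    (fun x hx => (hf x (interior_Ioo.subset hx)).hasDerivWithinAt)
    (fun x hx => hf' x (interior_Ioo.subset hx))

theorem MonotoneOn.le_of_tendsto_nhdsGT {α β : Type*} [LinearOrder α] [TopologicalSpace α]
    [OrderTopology α] [DenselyOrdered α] [Preorder β] [TopologicalSpace β]
    [OrderClosedTopology β] {g : α → β} {a b : α} {L : β} (hg : MonotoneOn g (Ioo a b))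
    (hL : Tendsto g (𝓝[>] a) (𝓝 L)) {y : α} (hy : y ∈ Ioo a b) : L ≤ g y :=
  haveI := nhdsGT_neBot_of_exists_gt ⟨y, hy.1⟩
  le_of_tendsto hL <| by
    filter_upwards [Ioo_mem_nhdsGT hy.1] with x hx
    exact hg ⟨hx.1, hx.2.trans hy.2⟩ hy hx.2.le

theorem image_sub_le_mul_sub_of_deriv_le_of_tendsto_nhdsGT {f f' : ℝ → ℝ} {a b C L : ℝ}
    (hf : ∀ x ∈ Ioo a b, HasDerivAt f (f' x) x) (hf' : ∀ x ∈ Ioo a b, f' x ≤ C)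
    (hL : Tendsto f (𝓝[>] a) (𝓝 L)) {y : ℝ} (hy : y ∈ Ioo a b) : f y - L ≤ C * (y - a) := by
  set g : ℝ → ℝ := fun x => C * (x - a) - f x
  have hg : ∀ x ∈ Ioo a b, HasDerivAt g (C - f' x) x := fun x hx =>
    ((((hasDerivAt_id' x).sub_const a).const_mul C).sub (hf x hx)).congr_deriv (by ring)
  have hg_mono : MonotoneOn g (Ioo a b) :=
    monotoneOn_Ioo_of_hasDerivAt_nonneg hg fun x hx => sub_nonneg.2 (hf' x hx)
  have hg_lim : Tendsto g (𝓝[>] a) (𝓝 (C * (a - a) - L)) :=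
    ((tendsto_nhdsWithin_of_tendsto_nhds ((continuous_id.sub continuous_const).const_mul C
      |>.tendsto a)).sub hL)
  have := hg_mono.le_of_tendsto_nhdsGT hg_lim hy
  simp only [sub_self, mul_zero, zero_sub, g] at this
  linarith

theorem not_bddBelow_image_of_div_sq_le_deriv {v v' : ℝ → ℝ} {a k : ℝ} (ha : 0 < a)
    (hk : 0 < k) (hv : ∀ x ∈ Ioo 0 a, HasDerivAt v (v' x) x)
    (hv' : ∀ x ∈ Ioo 0 a, k / x ^ 2 ≤ v' x) : ¬ BddBelow (v '' Ioo 0 a) := by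
  rintro ⟨m, hm⟩
  set F : ℝ → ℝ := fun x => v x + k * x⁻¹
  have hF : ∀ x ∈ Ioo 0 a, HasDerivAt F (v' x + k * -(x ^ 2)⁻¹) x := fun x hx =>
    (hv x hx).add ((hasDerivAt_inv hx.1.ne').const_mul k)
  have hF_mono : MonotoneOn F (Ioo 0 a) := by
    refine monotoneOn_Ioo_of_hasDerivAt_nonneg hF fun x hx => ?_
    have := hv' x hx
    rw [div_eq_mul_inv] at this
    linarith
  have hF_top : Tendsto F (𝓝[>] 0) atTop := by
    refine tendsto_atTop_mono' _ ?_ (tendsto_atTop_add_const_left _ m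
      (tendsto_inv_nhdsGT_zero.const_mul_atTop hk))
    filter_upwards [Ioo_mem_nhdsGT ha] with x hx
    exact add_le_add_left (hm (mem_image_of_mem v hx)) _
  have hmid : a / 2 ∈ Ioo 0 a := ⟨half_pos ha, half_lt_self ha⟩
  obtain ⟨x, hxF, hx⟩ :=
    ((hF_top.eventually_gt_atTop (F (a / 2))).and (Ioo_mem_nhdsGT hmid.1)).exists
  exact (hF_mono ⟨hx.1, hx.2.trans hmid.2⟩ hmid hx.2.le).not_gt hxF

/-- For any `δ > 0`, the majorising ODE `f' f'' = 1/(2 f²)` admits no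
increasing positive C² solution on `(0, δ)` with `f(y) → 0` as `y → 0⁺`. -/
theorem stmt_9 (δ : ℝ) (hδ : 0 < δ) :
    ¬ ∃ f : ℝ → ℝ,
      ContDiffOn ℝ 2 f (Set.Ioo 0 δ) ∧
      (∀ y ∈ Set.Ioo 0 δ, 0 < f y) ∧
      (∀ y ∈ Set.Ioo 0 δ, 0 ≤ deriv f y) ∧
      Filter.Tendsto f (nhdsWithin 0 (Set.Ioi 0)) (nhds 0) ∧
      (∀ y ∈ Set.Ioo 0 δ,
        deriv f y * deriv (deriv f) y = 1 / (2 * (f y) ^ 2)) := by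
  rintro ⟨f, hf, hpos, -, hlim, hode⟩
  have hf' : ∀ y ∈ Ioo 0 δ, HasDerivAt f (deriv f y) y := fun y hy =>
    ((hf.differentiableOn two_ne_zero).differentiableAt (isOpen_Ioo.mem_nhds hy)).hasDerivAt
  have hf'' : ∀ y ∈ Ioo 0 δ, HasDerivAt (deriv f) (deriv (deriv f) y) y := fun y hy =>
    (((hf.deriv_of_isOpen isOpen_Ioo (by norm_num)).differentiableOn one_ne_zero).differentiableAt
      (isOpen_Ioo.mem_nhds hy)).hasDerivAt
  have hv : ∀ y ∈ Ioo 0 δ, HasDerivAt (fun y => deriv f y ^ 2) (1 / f y ^ 2) y := by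
    intro y hy
    refine ((hf'' y hy).pow 2).congr_deriv ?_
    rw [Nat.cast_ofNat, pow_one, mul_assoc, hode y hy]
    field_simp
  have hv_mono : MonotoneOn (fun y => deriv f y ^ 2) (Ioo 0 δ) :=
    monotoneOn_Ioo_of_hasDerivAt_nonneg hv fun y _ => by positivity
  have hmid : δ / 2 ∈ Ioo 0 δ := ⟨half_pos hδ, half_lt_self hδ⟩
  set C := |deriv f (δ / 2)|
  have hC : C ≠ 0 := abs_ne_zero.2 <| left_ne_zero_of_mul <|
    (hode _ hmid).trans_ne (by have := hpos _ hmid; positivity)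
  have hsub : Ioo 0 (δ / 2) ⊆ Ioo 0 δ := Ioo_subset_Ioo_right hmid.2.le
  have hf'C : ∀ x ∈ Ioo 0 (δ / 2), deriv f x ≤ C := fun x hx =>
    (le_abs_self _).trans (sq_le_sq.1 (hv_mono (hsub hx) hmid hx.2.le))
  have hfC : ∀ y ∈ Ioo 0 (δ / 2), f y ≤ C * y := fun y hy => by
    simpa using image_sub_le_mul_sub_of_deriv_le_of_tendsto_nhdsGT
      (fun x hx => hf' x (hsub hx)) hf'C hlim hy
  refine not_bddBelow_image_of_div_sq_le_deriv hmid.1 (k := (C ^ 2)⁻¹) (by positivity)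
    (fun y hy => hv y (hsub hy)) (fun y hy => ?_) ⟨0, ?_⟩
  · have hfy := hpos y (hsub hy)
    calc (C ^ 2)⁻¹ / y ^ 2 = 1 / (C * y) ^ 2 := by field_simp
      _ ≤ 1 / f y ^ 2 := one_div_le_one_div_of_le (by positivity)
          (pow_le_pow_left₀ hfy.le (hfC y hy) 2)
  · rintro _ ⟨y, -, rfl⟩
    positivity
end
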